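/- arXiv:2601.00672 — 4 statements merged into one kernel-verified Lean document; each statement's English description precedes it below -/
import Mathlib

section
/- Let G = (V, E) be a simple undirected graph with vertex set V = {1, ..., N}, and let H_G(ℝ) denote the subgroup of GL_N(ℝ) generated by all invertible G-sparse matrices. Then H_G(ℝ) = GL_N(ℝ) if and only if the graph G is connected. -/
open Matrix
open scoped MatrixGroups

/-- A matrix `W` is `G`-sparse if, for `i ≠ j`, the off-diagonal entries `W i j`
may be nonzero only when `{i, j}` is an edge of `G` (diagonal entries are free). -/
def IsGSparse {N : ℕ} (G : SimpleGraph (Fin N)) (W : Matrix (Fin N) (Fin N) ℝ) : Prop :=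
  ∀ i j : Fin N, i ≠ j → ¬ G.Adj i j → W i j = 0

/-- `H_G(ℝ)`: the subgroup of `GL_N(ℝ)` generated by all invertible `G`-sparse matrices. -/
def sparseSubgroup {N : ℕ} (G : SimpleGraph (Fin N)) : Subgroup (GL (Fin N) ℝ) :=
  Subgroup.closure { A : GL (Fin N) ℝ | IsGSparse G (A : Matrix (Fin N) (Fin N) ℝ) }


/-! If `G` is connected, every transvection `t_ij(c) = 1 + c E_ij` lies in `H_G`: along a walk
`i — k ⋯ j` one has `t_ij(c) = ⁅t_ik(c), t_kj(1)⁆`, and transvections along edges are `G`-sparse.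
Together with the (sparse) invertible diagonal matrices they generate `GL_N`.

Conversely, if `j` is not reachable from `i`, every `G`-sparse matrix is block triangular with
respect to the two-block order `x ↦ G.Reachable i x` (in `Prop`, `False < True`), and invertible
block triangular matrices form a subgroup of `GL_N`, which then contains `H_G`. The transvection
`t_ij(1)` is not in it. -/

open scoped commutatorElement
open Matrix.SpecialLinearGroup (toGL)

lemma Subgroup.commutatorElement_mem {G : Type*} [Group G] {H : Subgroup G} {g h : G}
    (hg : g ∈ H) (hh : h ∈ H) : ⁅g, h⁆ ∈ H := by
  rw [commutatorElement_def]
  exact mul_mem (mul_mem (mul_mem hg hh) (inv_mem hg)) (inv_mem hh)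

namespace Matrix.SpecialLinearGroup

variable {ι R : Type*} [Fintype ι] [DecidableEq ι] [CommRing R]

lemma commutatorElement_transvection {i j k : ι} (hik : i ≠ k) (hkj : k ≠ j) (hij : i ≠ j)
    (b c : R) : ⁅transvection hik b, transvection hkj c⁆ = transvection hij (b * c) := by
  refine Subtype.ext ?_
  simp only [commutatorElement_def, transvection_inv, coe_mul, transvection_coe, add_mul, mul_add,
    one_mul, mul_one, single_mul_single_same, single_mul_single_of_ne _ _ _ _ hij.symm,
    single_mul_single_of_ne _ _ _ _ hkj.symm, single_mul_single_of_ne _ _ _ _ hik.symm,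
    add_zero, mul_neg, neg_mul, ← single_neg]
  abel

end Matrix.SpecialLinearGroup

namespace Matrix.GeneralLinearGroup

section CommRing

variable {n R : Type*} [Fintype n] [DecidableEq n] [CommRing R]

lemma toGL_transvection_mem_of_reachable (G : SimpleGraph n) (H : Subgroup (GL n R))
    (hadj : ∀ {i j : n} (h : G.Adj i j) (c : R), toGL (SpecialLinearGroup.transvection h.ne c) ∈ H)
    {i j : n} (hreach : G.Reachable i j) (hij : i ≠ j) (c : R) :
    toGL (SpecialLinearGroup.transvection hij c) ∈ H := by
  obtain ⟨w⟩ := hreach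
  induction w generalizing c with
  | nil => exact absurd rfl hij
  | @cons i k j hik w ih =>
    by_cases hkj : k = j
    · subst hkj
      exact hadj hik c
    · rw [← mul_one c, ← SpecialLinearGroup.commutatorElement_transvection hik.ne hkj hij,
        map_commutatorElement]
      exact Subgroup.commutatorElement_mem (hadj hik c) (ih hkj 1)

variable {α : Type*} [LinearOrder α]

variable (R) in
def blockTriangularSubgroup (b : n → α) : Subgroup (GL n R) where
  carrier := {A | (A : Matrix n n R).BlockTriangular b}
  one_mem' := blockTriangular_one
  mul_mem' := BlockTriangular.mul
  inv_mem' {A} hA := by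
    change (↑A⁻¹ : Matrix n n R).BlockTriangular b
    exact coe_units_inv A ▸ blockTriangular_inv_of_blockTriangular hA

end CommRing

lemma eq_top_of_isDiag_mem_of_transvection_mem {n K : Type*} [Fintype n] [DecidableEq n]
    [Field K] (H : Subgroup (GL n K)) (hdiag : ∀ A : GL n K, (A : Matrix n n K).IsDiag → A ∈ H)
    (htransvection : ∀ {i j : n} (hij : i ≠ j) (c : K),
      toGL (SpecialLinearGroup.transvection hij c) ∈ H) :
    H = ⊤ := by
  refine eq_top_iff.2 fun A _ => ?_
  obtain ⟨B, hB, hBA⟩ : ∃ B ∈ H, (B : Matrix n n K) = A := by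
    refine diagonal_transvection_induction_of_det_ne_zero
      (fun M => ∃ B ∈ H, (B : Matrix n n K) = M) A ((isUnit_iff_isUnit_det _).1 A.isUnit).ne_zero
      (fun D hD => ?_) (fun t => ?_) ?_
    · exact ⟨mkOfDetNeZero _ hD, hdiag _ (isDiag_diagonal D), rfl⟩
    · exact ⟨_, htransvection t.hij t.c, rfl⟩
    · rintro _ _ - - ⟨B₁, hB₁, rfl⟩ ⟨B₂, hB₂, rfl⟩
      exact ⟨B₁ * B₂, mul_mem hB₁ hB₂, rfl⟩
  rwa [Units.ext hBA] at hB

end Matrix.GeneralLinearGroup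

open Matrix.GeneralLinearGroup

variable {N : ℕ} {G : SimpleGraph (Fin N)}

lemma IsGSparse.of_isDiag {A : Matrix (Fin N) (Fin N) ℝ} (hA : A.IsDiag) : IsGSparse G A :=
  fun _ _ hij _ => hA hij

lemma isGSparse_transvection_of_adj {i j : Fin N} (h : G.Adj i j) (c : ℝ) :
    IsGSparse G (transvection i j c) := by
  intro a b hab hnadj
  rw [transvection, Matrix.add_apply, one_apply_ne hab, zero_add, single_apply_of_ne]
  rintro ⟨rfl, rfl⟩
  exact hnadj h

lemma IsGSparse.blockTriangular {A : Matrix (Fin N) (Fin N) ℝ} (hA : IsGSparse G A)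
    {α : Type*} [LinearOrder α] {b : Fin N → α} (hb : ∀ {i j}, G.Adj i j → b i = b j) :
    A.BlockTriangular b :=
  fun i j hlt => hA i j (fun h => hlt.ne (congrArg b h).symm) (fun h => hlt.ne (hb h).symm)

lemma sparseSubgroup_le_blockTriangularSubgroup {α : Type*} [LinearOrder α] {b : Fin N → α}
    (hb : ∀ {i j}, G.Adj i j → b i = b j) : sparseSubgroup G ≤ blockTriangularSubgroup ℝ b :=
  (Subgroup.closure_le _).2 fun _ hA => IsGSparse.blockTriangular hA hb

lemma sparseSubgroup_eq_top_of_connected (hG : G.Connected) : sparseSubgroup G = ⊤ :=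
  eq_top_of_isDiag_mem_of_transvection_mem _
    (fun _ hA => Subgroup.subset_closure (IsGSparse.of_isDiag hA))
    (toGL_transvection_mem_of_reachable G _
      (fun h c => Subgroup.subset_closure (isGSparse_transvection_of_adj h c))
      (hG.preconnected _ _))

lemma reachable_of_sparseSubgroup_eq_top (h : sparseSubgroup G = ⊤) (i j : Fin N) :
    G.Reachable i j := by
  by_contra hij
  have hne : i ≠ j := by
    rintro rfl
    exact hij .rfl
  have hb : ∀ {x y}, G.Adj x y → G.Reachable i x = G.Reachable i y := fun hxy =>
    propext ⟨fun hx => hx.trans hxy.reachable, fun hy => hy.trans hxy.symm.reachable⟩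
  have hmem :
      toGL (SpecialLinearGroup.transvection hne 1) ∈ blockTriangularSubgroup ℝ (G.Reachable i) :=
    sparseSubgroup_le_blockTriangularSubgroup hb (h ▸ Subgroup.mem_top _)
  have hlt : G.Reachable i j < G.Reachable i i :=
    lt_of_le_not_ge (fun _ => .rfl) (fun hii => hij (hii .rfl))
  simpa [SpecialLinearGroup.transvection_coe, hne] using hmem hlt

/-- `H_G(ℝ) = GL_N(ℝ)` if and only if the graph `G` is connected. -/
theorem sparseSubgroup_eq_top_iff_connected {N : ℕ} (hN : 0 < N)
    (G : SimpleGraph (Fin N)) :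
    sparseSubgroup G = ⊤ ↔ G.Connected :=
  ⟨fun h => (SimpleGraph.connected_iff G).2
      ⟨reachable_of_sparseSubgroup_eq_top h, ⟨⟨0, hN⟩⟩⟩,
    sparseSubgroup_eq_top_of_connected⟩
end

section
/- Let G = (V, E) be a connected simple undirected graph with vertex set V = {1, ..., N}. Then for every pair of distinct indices i ≠ j in {1, ..., N} and every t ∈ ℝ, the transvection matrix E_{ij}(t) = I_N + t·e_{ij} belongs to the subgroup H_G(ℝ) of GL_N(ℝ) generated by all invertible G-sparse matrices. -/
open Matrix
open scoped MatrixGroups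

/-!
Transvections along an edge of `G` are `G`-sparse, and the commutator identity
`⁅E_{ik}(a), E_{kj}(b)⁆ = E_{ij}(ab)` for distinct `i, k, j` lets one shorten a walk from `i`
to `j` by one edge at a time, so every transvection `E_{ij}(t)` with `i, j` in the same
component is a product of sparse transvections.
-/

open scoped commutatorElement

namespace Matrix.SpecialLinearGroup

variable {ι F : Type*} [DecidableEq ι] [Fintype ι] [CommRing F]

theorem commutator_transvection {i k j : ι} (hik : i ≠ k) (hkj : k ≠ j) (hij : i ≠ j) (a b : F) :
    ⁅transvection hik a, transvection hkj b⁆ = transvection hij (a * b) := by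
  refine Subtype.ext ?_
  simp only [commutatorElement_def, transvection_inv, coe_mul, transvection_coe,
    mul_add, add_mul, one_mul, mul_one, zero_mul, single_mul_single_same,
    single_mul_single_of_ne _ _ _ _ hik.symm, single_mul_single_of_ne _ _ _ _ hkj.symm,
    single_mul_single_of_ne _ _ _ _ hij.symm, mul_neg, neg_mul, ← single_neg]
  abel

theorem transvection_mem_of_reachable {G : SimpleGraph ι} {H : Subgroup (SpecialLinearGroup ι F)}
    (hH : ∀ ⦃i j : ι⦄ (hij : G.Adj i j) (b : F), transvection hij.ne b ∈ H)
    {i j : ι} (hr : G.Reachable i j) (hij : i ≠ j) (b : F) : transvection hij b ∈ H := by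
  obtain ⟨p⟩ := hr
  induction p generalizing b with
  | nil => exact absurd rfl hij
  | @cons i k j hik p ih =>
    by_cases hkj : k = j
    · subst hkj
      exact hH hik b
    · have hik_mem := hH hik b
      have hkj_mem := ih hkj 1
      rw [← mul_one b, ← commutator_transvection hik.ne hkj hij, commutatorElement_def]
      exact mul_mem (mul_mem (mul_mem hik_mem hkj_mem) (inv_mem hik_mem)) (inv_mem hkj_mem)

end Matrix.SpecialLinearGroup

theorem isGSparse_transvection {N : ℕ} {G : SimpleGraph (Fin N)} {i j : Fin N} (h : G.Adj i j)
    (t : ℝ) : IsGSparse G (transvection i j t) := by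
  intro a b hab hadj
  rw [transvection, Matrix.add_apply, one_apply_ne hab, single_apply_of_ne, zero_add]
  rintro ⟨rfl, rfl⟩
  exact hadj h

/-- If `G` is connected, then for every pair of distinct indices `i ≠ j` and every `t ∈ ℝ`,
the transvection `E_{ij}(t) = I_N + t • e_{ij}` belongs to `H_G(ℝ)`. -/
theorem transvection_mem_sparseSubgroup {N : ℕ} (G : SimpleGraph (Fin N))
    (hG : G.Connected) (i j : Fin N) (hij : i ≠ j) (t : ℝ)
    (A : GL (Fin N) ℝ)
    (hA : (A : Matrix (Fin N) (Fin N) ℝ) = 1 + t • Matrix.single i j (1 : ℝ)) :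
    A ∈ sparseSubgroup G := by
  have hA_transvection : A = SpecialLinearGroup.toGL (SpecialLinearGroup.transvection hij t) := by
    ext : 1
    rw [hA, smul_single, smul_eq_mul, mul_one]
    rfl
  rw [hA_transvection, ← Subgroup.mem_comap]
  refine SpecialLinearGroup.transvection_mem_of_reachable (fun k l hkl b => ?_)
    (hG.preconnected i j) hij t
  exact Subgroup.subset_closure (isGSparse_transvection hkl b)
end

section
/- Let σ : ℝ → ℝ and t₀ ∈ ℝ be such that σ is continuously differentiable on an open interval U containing t₀ and σ'(t₀) ≠ 0. Let M ∈ M_N(ℝ) be a matrix. For δ > 0 define the two-layer block T_δ(z) := (1/(δ σ'(t₀))) (σ(δ M z + t₀ 𝟙) − σ(t₀) 𝟙), where 𝟙 ∈ ℝ^N is the all-ones vector and σ is applied componentwise. Then for every R > 0 and every η > 0 there exists δ > 0 such that sup over all z ∈ ℝ^N with ‖z‖_∞ ≤ R of ‖T_δ(z) − M z‖_∞ is at most η. -/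
/-!
Differentiability at `t₀` gives `σ (t₀ + h) - σ t₀ = h σ'(t₀) + o(h)`. Taking `h = δ (M z)ᵢ`, which
is `O(δ)` uniformly on the ball since `M` is bounded, and dividing by `δ σ'(t₀)` leaves an error that
is `o(1)` as `δ → 0`, uniformly in `z`.
-/

open Matrix Filter Topology
open scoped Matrix.Norms.Operator

theorem HasDerivAt.eventually_norm_div_sub_le {𝕜 : Type*} [NontriviallyNormedField 𝕜]
    {f : 𝕜 → 𝕜} {f' x : 𝕜} (hf : HasDerivAt f f' x) (hf' : f' ≠ 0) (C : ℝ) {η : ℝ}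
    (hη : 0 < η) :
    ∀ᶠ δ in 𝓝[≠] (0 : 𝕜), ∀ w, ‖w‖ ≤ C → ‖(f (δ * w + x) - f x) / (δ * f') - w‖ ≤ η := by
  set K := max C 0 + 1
  have hK : 0 < K := by positivity
  set ε := η * ‖f'‖ / K
  obtain ⟨r, hr, hsmall⟩ := Metric.eventually_nhds_iff.1
    ((hasDerivAt_iff_isLittleO_nhds_zero.1 hf).def (by positivity : 0 < ε))
  filter_upwards [self_mem_nhdsWithin,
    nhdsWithin_le_nhds (Metric.ball_mem_nhds 0 (div_pos hr hK))] with δ hδ hδr w hw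
  replace hδ : δ ≠ 0 := hδ
  replace hδr : ‖δ‖ * K < r := by
    rwa [mem_ball_zero_iff, lt_div_iff₀ hK] at hδr
  have hwK : ‖w‖ ≤ K := hw.trans ((le_max_left C 0).trans (lt_add_one _).le)
  have hδw : ‖δ * w‖ < r := by
    rw [norm_mul]
    exact (mul_le_mul_of_nonneg_left hwK (norm_nonneg δ)).trans_lt hδr
  have hrem := hsmall (y := δ * w) (by rwa [dist_zero_right])
  calc ‖(f (δ * w + x) - f x) / (δ * f') - w‖
      = ‖f (x + δ * w) - f x - (δ * w) • f'‖ / (‖δ‖ * ‖f'‖) := by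
        rw [← norm_mul, ← norm_div, smul_eq_mul, add_comm x]
        congr 1
        field_simp
    _ ≤ ε * (‖δ‖ * K) / (‖δ‖ * ‖f'‖) := by
        gcongr
        exact hrem.trans (by rw [norm_mul]; gcongr)
    _ = η := by
        simp only [ε]
        field_simp

/-- The two-layer `σ`-block `T_δ(z) = (1 / (δ σ'(t₀))) (σ(δ M z + t₀ 𝟙) - σ(t₀) 𝟙)`
(with `σ` applied componentwise) approximates the linear map `z ↦ M z` uniformly on
sup-norm balls: for every `R > 0` and `η > 0` there is `δ > 0` such that
`‖T_δ(z) - M z‖_∞ ≤ η` whenever `‖z‖_∞ ≤ R`. -/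
theorem two_layer_block_approx_linear {N : ℕ} (σ : ℝ → ℝ) (t₀ a b : ℝ)
    (ht₀ : t₀ ∈ Set.Ioo a b) (hσ : ContDiffOn ℝ 1 σ (Set.Ioo a b))
    (hd : deriv σ t₀ ≠ 0) (M : Matrix (Fin N) (Fin N) ℝ) :
    ∀ R > 0, ∀ η > 0, ∃ δ > 0, ∀ z : Fin N → ℝ, ‖z‖ ≤ R →
      ‖(fun i => (σ (δ * M.mulVec z i + t₀) - σ t₀) / (δ * deriv σ t₀)) - M.mulVec z‖ ≤ η := by
  intro R _ η hη
  have hσ' : HasDerivAt σ (deriv σ t₀) t₀ :=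
    ((hσ.differentiableOn one_ne_zero).differentiableAt (isOpen_Ioo.mem_nhds ht₀)).hasDerivAt
  have hpos : 𝓝[>] (0 : ℝ) ≤ 𝓝[≠] 0 := nhdsWithin_mono _ fun _ h => ne_of_gt h
  obtain ⟨δ, hclose, hδ⟩ := ((hσ'.eventually_norm_div_sub_le hd (‖M‖ * R) hη).filter_mono
    hpos).and self_mem_nhdsWithin |>.exists
  refine ⟨δ, hδ, fun z hz => (pi_norm_le_iff_of_nonneg hη.le).2 fun i => hclose _ ?_⟩
  calc ‖(M *ᵥ z) i‖ ≤ ‖M *ᵥ z‖ := norm_le_pi_norm _ i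
    _ ≤ ‖M‖ * R := (linfty_opNorm_mulVec M z).trans (by gcongr)
end

section
/- Let σ : ℝ → ℝ be Lipschitz continuous with Lipschitz constant L_σ, and let N_L = Φ_L ∘ ··· ∘ Φ_1 : ℝ^N → ℝ^N be an L-layer neural network with layers Φ_ℓ(x) = σ(W^(ℓ) x + b^(ℓ)) (σ applied componentwise). Suppose each weight matrix W^(ℓ) satisfies: every entry has absolute value at most ω, and every row and every column of W^(ℓ) has at most γ nonzero entries. Then for any inputs f, g ∈ ℝ^N, ‖N_L(f) − N_L(g)‖₂ ≤ (L_σ ω γ)^L ‖f − g‖₂; in particular, the stability constant is independent of the dimension N. -/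
open Matrix

/-- One network layer `Φ(x) = σ (W x + b)` on Euclidean space, `σ` applied componentwise. -/
noncomputable def netLayer {N : ℕ} (σ : ℝ → ℝ) (W : Matrix (Fin N) (Fin N) ℝ)
    (b : EuclideanSpace ℝ (Fin N)) (x : EuclideanSpace ℝ (Fin N)) :
    EuclideanSpace ℝ (Fin N) :=
  WithLp.toLp 2 (fun i => σ (W.mulVec x i + b i))

/-- The `L`-layer network `N_L = Φ_L ∘ ⋯ ∘ Φ_1` with `Φ_ℓ(x) = σ (W⁽ˡ⁾ x + b⁽ˡ⁾)`. -/
noncomputable def netForward {N : ℕ} (σ : ℝ → ℝ) :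
    (L : ℕ) → (Fin L → Matrix (Fin N) (Fin N) ℝ) →
    (Fin L → EuclideanSpace ℝ (Fin N)) → EuclideanSpace ℝ (Fin N) →
    EuclideanSpace ℝ (Fin N)
  | 0, _, _, x => x
  | L + 1, W, b, x =>
      netLayer σ (W (Fin.last L)) (b (Fin.last L))
        (netForward σ L (fun ℓ => W ℓ.castSucc) (fun ℓ => b ℓ.castSucc) x)

/-! Each layer is `L_σ`-Lipschitz as a function of `W x`, so it suffices to bound the Euclidean
operator norm of `W`. By Schur's test, `‖W‖₂²` is at most the largest absolute row sum times the
largest absolute column sum, and sparsity bounds both by `ωγ`; composing the `L` layers gives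
`(L_σ ω γ)^L`. -/

theorem Finset.sum_abs_le_of_card_support_le {ι : Type*} [Fintype ι] {v : ι → ℝ} {ω : ℝ}
    {γ : ℕ} (hω₀ : 0 ≤ ω) (hv : ∀ j, |v j| ≤ ω)
    (hsupp : (Finset.univ.filter fun j => v j ≠ 0).card ≤ γ) :
    ∑ j, |v j| ≤ ω * γ := by
  rw [← Finset.sum_filter_ne_zero]
  calc ∑ j ∈ Finset.univ.filter (fun j => |v j| ≠ 0), |v j|
      ≤ (Finset.univ.filter fun j => v j ≠ 0).card • ω := by
        simp only [ne_eq, abs_eq_zero]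
        exact Finset.sum_le_card_nsmul _ _ _ fun j _ => hv j
    _ ≤ ω * γ := by rw [nsmul_eq_mul, mul_comm]; gcongr

theorem Matrix.sum_sq_mulVec_le {m n : Type*} [Fintype m] [Fintype n] (A : Matrix m n ℝ)
    {r c : ℝ} (hr : 0 ≤ r) (hrow : ∀ i, ∑ j, |A i j| ≤ r) (hcol : ∀ j, ∑ i, |A i j| ≤ c)
    (x : n → ℝ) : ∑ i, (A *ᵥ x) i ^ 2 ≤ r * c * ∑ j, x j ^ 2 := by
  have row_cs : ∀ i, (A *ᵥ x) i ^ 2 ≤ (∑ j, |A i j|) * ∑ j, |A i j| * x j ^ 2 := fun i =>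
    calc (A *ᵥ x) i ^ 2 ≤ (∑ j, |A i j * x j|) ^ 2 := by
          rw [← sq_abs]; gcongr; exact Finset.abs_sum_le_sum_abs _ _
      _ ≤ _ := Finset.sum_sq_le_sum_mul_sum_of_sq_le_mul _ (fun j _ => abs_nonneg _)
          (fun j _ => by positivity)
          fun j _ => le_of_eq (by rw [abs_mul, mul_pow, sq_abs (x j)]; ring)
  calc ∑ i, (A *ᵥ x) i ^ 2 ≤ ∑ i, r * ∑ j, |A i j| * x j ^ 2 := by
        gcongr with i
        exact (row_cs i).trans (by gcongr; exact hrow i)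
    _ = r * ∑ j, (∑ i, |A i j|) * x j ^ 2 := by
        simp only [← Finset.mul_sum, Finset.sum_mul]; rw [Finset.sum_comm]
    _ ≤ r * ∑ j, c * x j ^ 2 := by gcongr with j; exact hcol j
    _ = r * c * ∑ j, x j ^ 2 := by rw [← Finset.mul_sum, mul_assoc]

theorem Matrix.lipschitzWith_toEuclideanLin {m n : Type*} [Fintype m] [Fintype n]
    [DecidableEq n] (A : Matrix m n ℝ) {r : NNReal} (hrow : ∀ i, ∑ j, |A i j| ≤ r)
    (hcol : ∀ j, ∑ i, |A i j| ≤ r) : LipschitzWith r (Matrix.toEuclideanLin A) := by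
  refine AddMonoidHomClass.lipschitz_of_bound_nnnorm _ _ fun x => ?_
  rw [← NNReal.coe_le_coe, NNReal.coe_mul, coe_nnnorm, coe_nnnorm]
  refine le_of_pow_le_pow_left₀ two_ne_zero (by positivity) ?_
  rw [mul_pow, EuclideanSpace.real_norm_sq_eq, EuclideanSpace.real_norm_sq_eq, sq]
  exact A.sum_sq_mulVec_le r.2 hrow hcol x

theorem LipschitzWith.euclideanSpace_map {ι : Type*} [Fintype ι] {σ : ℝ → ℝ} {K : NNReal}
    (h : LipschitzWith K σ) :
    LipschitzWith K (fun x : EuclideanSpace ℝ ι => WithLp.toLp 2 (fun i => σ (x i))) := by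
  refine LipschitzWith.of_dist_le_mul fun x y => ?_
  refine le_of_pow_le_pow_left₀ two_ne_zero (by positivity) ?_
  rw [mul_pow, EuclideanSpace.dist_sq_eq, EuclideanSpace.dist_sq_eq, Finset.mul_sum]
  gcongr with i
  rw [← mul_pow]
  gcongr
  exact h.dist_le_mul _ _

theorem LipschitzWith.netLayer {N : ℕ} {σ : ℝ → ℝ} {Lσ K : NNReal} (hσ : LipschitzWith Lσ σ)
    {W : Matrix (Fin N) (Fin N) ℝ} (hW : LipschitzWith K (Matrix.toEuclideanLin W))
    (b : EuclideanSpace ℝ (Fin N)) : LipschitzWith (Lσ * K) (netLayer σ W b) := by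
  have h := hσ.euclideanSpace_map.comp ((isometry_add_right b).lipschitz.comp hW)
  rwa [one_mul] at h

theorem lipschitzWith_netForward {N : ℕ} {σ : ℝ → ℝ} {K : NNReal} :
    ∀ {L : ℕ} {W : Fin L → Matrix (Fin N) (Fin N) ℝ} {b : Fin L → EuclideanSpace ℝ (Fin N)},
      (∀ ℓ, LipschitzWith K (netLayer σ (W ℓ) (b ℓ))) →
        LipschitzWith (K ^ L) (netForward σ L W b)
  | 0, _, _, _ => LipschitzWith.id
  | L + 1, _, _, h => by
      rw [pow_succ']
      exact (h _).comp (lipschitzWith_netForward fun ℓ => h ℓ.castSucc)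

/-- Stability of an `L`-layer network with `L_σ`-Lipschitz activation whose weight matrices
have entries bounded by `ω` and at most `γ` nonzero entries in every row and column:
`‖N_L(f) - N_L(g)‖₂ ≤ (L_σ ω γ)^L ‖f - g‖₂`, a bound independent of the dimension `N`. -/
theorem sparse_network_stability {N L : ℕ} [NeZero N] (σ : ℝ → ℝ) (Lσ : NNReal)
    (hσ : LipschitzWith Lσ σ)
    (W : Fin L → Matrix (Fin N) (Fin N) ℝ) (b : Fin L → EuclideanSpace ℝ (Fin N))
    (ω : ℝ) (γ : ℕ)
    (hω : ∀ ℓ i j, |W ℓ i j| ≤ ω)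
    (hrow : ∀ ℓ i, (Finset.univ.filter fun j => W ℓ i j ≠ 0).card ≤ γ)
    (hcol : ∀ ℓ j, (Finset.univ.filter fun i => W ℓ i j ≠ 0).card ≤ γ)
    (f g : EuclideanSpace ℝ (Fin N)) :
    ‖netForward σ L W b f - netForward σ L W b g‖ ≤
      ((Lσ : ℝ) * ω * γ) ^ L * ‖f - g‖ := by
  rcases Nat.eq_zero_or_pos L with rfl | hL
  · simp [netForward]
  have hω₀ : 0 ≤ ω := (abs_nonneg _).trans (hω ⟨0, hL⟩ 0 0)
  let r : NNReal := ⟨ω * γ, by positivity⟩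
  have hlayer : ∀ ℓ, LipschitzWith (Lσ * r) (netLayer σ (W ℓ) (b ℓ)) := fun ℓ =>
    hσ.netLayer ((W ℓ).lipschitzWith_toEuclideanLin (r := r)
      (fun i => Finset.sum_abs_le_of_card_support_le hω₀ (hω ℓ i) (hrow ℓ i))
      (fun j => Finset.sum_abs_le_of_card_support_le hω₀ (fun i => hω ℓ i j) (hcol ℓ j))) _
  have hr : (r : ℝ) = ω * γ := rfl
  simpa only [dist_eq_norm, NNReal.coe_pow, NNReal.coe_mul, hr, mul_assoc]
    using (lipschitzWith_netForward hlayer).dist_le_mul f g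
end
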